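/- Fix integers k, L ≥ 1, and consider networks f_{L+1}(x) = uᵀ f_L(x) defined recursively by f_0(x)=x and f_{j+1}(x) = (W^{j+1} f_j(x))^{∘k}, where each weight matrix W^j satisfies ‖W^j‖ ≤ B (spectral norm) and ‖u‖ ≤ b. Then the Rademacher complexity of this class on any m points of Euclidean norm at most b_x is at most b · B^{k+k²+⋯+k^L} · b_x^{k^L} / √m. -/

import Mathlib

/-- Euclidean norm of a vector in `ℝ^d`. -/
noncomputable def euclNorm {d : ℕ} (x : Fin d → ℝ) : ℝ := Real.sqrt (∑ i, x i ^ 2)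

/-- Spectral norm of a matrix: `sup_{‖x‖=1} ‖Mx‖`. -/
noncomputable def specNorm {n d : ℕ} (M : Matrix (Fin n) (Fin d) ℝ) : ℝ :=
  sSup {r : ℝ | ∃ x : Fin d → ℝ, euclNorm x = 1 ∧ r = euclNorm (M.mulVec x)}

/-- Expectation over i.i.d. uniform `{-1,+1}` signs `ε : Fin m → ℝ`. -/
noncomputable def rademacherExp (m : ℕ) (f : (Fin m → ℝ) → ℝ) : ℝ :=
  (∑ ε : Fin m → Bool, f (fun i => if ε i then 1 else -1)) / 2 ^ m

/-- The forward pass `f_0(x) = x`, `f_{j+1}(x) = (W^{j+1} f_j(x))^{∘k}`. -/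
noncomputable def fwd (k : ℕ) (dims : ℕ → ℕ)
    (W : ∀ j : ℕ, Matrix (Fin (dims (j + 1))) (Fin (dims j)) ℝ) :
    (j : ℕ) → (Fin (dims 0) → ℝ) → Fin (dims j) → ℝ
  | 0, x => x
  | j + 1, x => fun ℓ => ((W j).mulVec (fwd k dims W j x)) ℓ ^ k

/-!
Unrolling the recursion, `f_j(x) = C_j x^{⊗k^j}` is linear in a tensor power of the input:
`C_0 = 1`, and the rows of `C_{j+1}` are the `k`-th tensor powers of the rows of `W^{j+1} C_j`,
since `⟨w, y⟩^k = ⟨w^{⊗k}, y^{⊗k}⟩`. Kronecker powers multiply operator-norm bounds, so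
`‖C_L‖ ≤ B^{k+⋯+k^L}`. Hence every network of the class satisfies
`∑ ε_i uᵀ f_L(x_i) = uᵀ C_L Φ(ε) ≤ b B^{k+⋯+k^L} ‖Φ(ε)‖`, where `Φ(ε) = ∑ ε_i x_i^{⊗k^L}` does not
depend on the weights, and `E‖Φ(ε)‖ ≤ (E‖Φ(ε)‖²)^{1/2} = (∑ ‖x_i‖^{2k^L})^{1/2} ≤ √m b_x^{k^L}`.
-/

open Finset Matrix

lemma Fintype.sum_fin_succ_pi {Y M : Type*} [Fintype Y] [AddCommMonoid M] {n : ℕ}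
    (f : (Fin (n + 1) → Y) → M) :
    ∑ τ, f τ = ∑ y, ∑ τ : Fin n → Y, f (Fin.cons y τ) := by
  rw [← Fintype.sum_prod_type']
  exact (Fintype.sum_equiv (Fin.consEquiv fun _ => Y) _ _ fun _ => rfl).symm

def tensorPowVec {Y R : Type*} [CommSemiring R] (n : ℕ) (v : Y → R) : (Fin n → Y) → R :=
  fun τ => ∏ t, v (τ t)

theorem sum_tensorPowVec_sq {Y : Type*} [Fintype Y] (n : ℕ) (v : Y → ℝ) :
    ∑ τ, tensorPowVec n v τ ^ 2 = (∑ y, v y ^ 2) ^ n := by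
  simp only [tensorPowVec, Fintype.sum_pow, prod_pow]

namespace Matrix

variable {X Y Z R : Type*}

def tensorPow [CommSemiring R] (n : ℕ) (A : Matrix X Y R) : Matrix (Fin n → X) (Fin n → Y) R :=
  of fun σ τ => ∏ t, A (σ t) (τ t)

/-- Row `x` of `A.rowTensorPow n` is the `n`-th tensor power of row `x` of `A`. -/
def rowTensorPow [CommSemiring R] (n : ℕ) (A : Matrix X Y R) : Matrix X (Fin n → Y) R :=
  (A.tensorPow n).submatrix (fun x _ => x) id

theorem tensorPow_succ_mulVec_cons [CommSemiring R] [Fintype Y] {n : ℕ} (A : Matrix X Y R)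
    (z : (Fin (n + 1) → Y) → R) (x : X) (σ : Fin n → X) :
    (A.tensorPow (n + 1) *ᵥ z) (Fin.cons x σ) =
      (A *ᵥ fun y => (A.tensorPow n *ᵥ fun τ => z (Fin.cons y τ)) σ) x := by
  simp only [mulVec, dotProduct, tensorPow, of_apply, Fintype.sum_fin_succ_pi (n := n),
    Fin.prod_univ_succ, Fin.cons_zero, Fin.cons_succ, mul_sum, mul_assoc]

theorem rowTensorPow_mulVec_tensorPowVec [CommSemiring R] [Fintype Y] (n : ℕ)
    (A : Matrix X Y R) (v : Y → R) :
    A.rowTensorPow n *ᵥ tensorPowVec n v = fun x => (A *ᵥ v) x ^ n := by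
  ext x
  simp only [mulVec, dotProduct, Fintype.sum_pow, rowTensorPow, tensorPow, tensorPowVec,
    submatrix_apply, of_apply, id, prod_mul_distrib]

variable [Fintype X] [Fintype Y] [Fintype Z]

/-- `A.OpNormLE c`: the ℓ² operator norm of `A` is at most `|c|`, stated with squared norms. -/
def OpNormLE (A : Matrix X Y ℝ) (c : ℝ) : Prop :=
  ∀ z : Y → ℝ, ∑ x, (A *ᵥ z) x ^ 2 ≤ c ^ 2 * ∑ y, z y ^ 2

theorem opNormLE_one [DecidableEq X] : (1 : Matrix X X ℝ).OpNormLE 1 := fun z => by simp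

theorem OpNormLE.mono {A : Matrix X Y ℝ} {c c' : ℝ} (hA : A.OpNormLE c) (hc : 0 ≤ c)
    (hcc' : c ≤ c') : A.OpNormLE c' := fun z =>
  (hA z).trans <| by gcongr

theorem OpNormLE.mul {A : Matrix X Y ℝ} {B : Matrix Y Z ℝ} {a b : ℝ}
    (hA : A.OpNormLE a) (hB : B.OpNormLE b) : (A * B).OpNormLE (a * b) := fun z =>
  calc ∑ x, ((A * B) *ᵥ z) x ^ 2 = ∑ x, (A *ᵥ (B *ᵥ z)) x ^ 2 := by rw [← mulVec_mulVec]
    _ ≤ a ^ 2 * ∑ y, (B *ᵥ z) y ^ 2 := hA _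
    _ ≤ a ^ 2 * (b ^ 2 * ∑ w, z w ^ 2) := by gcongr; exact hB z
    _ = (a * b) ^ 2 * ∑ w, z w ^ 2 := by ring

theorem OpNormLE.submatrix_left {X' : Type*} [Fintype X'] {A : Matrix X Y ℝ} {c : ℝ}
    (hA : A.OpNormLE c) {e : X' → X} (he : e.Injective) : (A.submatrix e id).OpNormLE c :=
  fun z =>
  calc ∑ x', (A.submatrix e id *ᵥ z) x' ^ 2 = ∑ x ∈ univ.map ⟨e, he⟩, (A *ᵥ z) x ^ 2 := by
        rw [sum_map]; rfl
    _ ≤ ∑ x, (A *ᵥ z) x ^ 2 :=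
        sum_le_sum_of_subset_of_nonneg (subset_univ _) fun _ _ _ => sq_nonneg _
    _ ≤ c ^ 2 * ∑ y, z y ^ 2 := hA z

theorem OpNormLE.tensorPow {A : Matrix X Y ℝ} {c : ℝ} (hA : A.OpNormLE c) :
    ∀ n, (A.tensorPow n).OpNormLE (c ^ n)
  | 0 => fun z => by simp [Matrix.tensorPow, mulVec, dotProduct]
  | n + 1 => fun z => by
    -- `A^{⊗(n+1)} = A ⊗ A^{⊗n}`: apply `A` in the first factor, then `A^{⊗n}` in the others
    set w : Y → (Fin n → X) → ℝ := fun y => A.tensorPow n *ᵥ fun τ => z (Fin.cons y τ)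
    calc ∑ σ, (A.tensorPow (n + 1) *ᵥ z) σ ^ 2 = ∑ σ, ∑ x, (A *ᵥ fun y => w y σ) x ^ 2 := by
          rw [Fintype.sum_fin_succ_pi, sum_comm]
          simp only [tensorPow_succ_mulVec_cons, w]
      _ ≤ ∑ σ, c ^ 2 * ∑ y, w y σ ^ 2 := sum_le_sum fun σ _ => hA _
      _ = c ^ 2 * ∑ y, ∑ σ, w y σ ^ 2 := by rw [← mul_sum, sum_comm]
      _ ≤ c ^ 2 * ∑ y, (c ^ n) ^ 2 * ∑ τ, z (Fin.cons y τ) ^ 2 := by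
          gcongr with y; exact OpNormLE.tensorPow hA n _
      _ = (c ^ (n + 1)) ^ 2 * ∑ τ, z τ ^ 2 := by
          rw [Fintype.sum_fin_succ_pi, ← mul_sum, ← mul_assoc]; ring

theorem OpNormLE.rowTensorPow {A : Matrix X Y ℝ} {c : ℝ} (hA : A.OpNormLE c) {n : ℕ}
    (hn : n ≠ 0) : (A.rowTensorPow n).OpNormLE (c ^ n) :=
  haveI : Nonempty (Fin n) := Fin.pos_iff_nonempty.mp (Nat.pos_of_ne_zero hn)
  (hA.tensorPow n).submatrix_left fun _ _ h => congrFun h (Classical.arbitrary _)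

end Matrix

theorem euclNorm_sq {d : ℕ} (x : Fin d → ℝ) : euclNorm x ^ 2 = ∑ i, x i ^ 2 :=
  Real.sq_sqrt (sum_nonneg fun _ _ => sq_nonneg _)

theorem euclNorm_eq_norm {d : ℕ} (x : Fin d → ℝ) :
    euclNorm x = ‖(WithLp.toLp 2 x : EuclideanSpace ℝ (Fin d))‖ := by
  simp [euclNorm, EuclideanSpace.norm_eq]

theorem specNorm_eq_norm {n d : ℕ} (W : Matrix (Fin n) (Fin d) ℝ) :
    specNorm W = ‖LinearMap.toContinuousLinearMap (Matrix.toEuclideanLin W)‖ := by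
  rw [specNorm, ← ContinuousLinearMap.sSup_sphere_eq_norm]
  congr 1
  ext r
  simp only [Set.mem_ofPred_eq, Set.mem_image, mem_sphere_zero_iff_norm, euclNorm_eq_norm]
  constructor
  · rintro ⟨x, hx, rfl⟩
    exact ⟨WithLp.toLp 2 x, hx, rfl⟩
  · rintro ⟨y, hy, rfl⟩
    exact ⟨y.ofLp, hy, rfl⟩

theorem Matrix.opNormLE_specNorm {n d : ℕ} (W : Matrix (Fin n) (Fin d) ℝ) :
    W.OpNormLE (specNorm W) := fun z => by
  set L := LinearMap.toContinuousLinearMap (Matrix.toEuclideanLin W)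
  have h := L.le_opNorm (WithLp.toLp 2 z)
  have hLz : L (WithLp.toLp 2 z) = WithLp.toLp 2 (W *ᵥ z) := rfl
  rw [hLz, ← euclNorm_eq_norm, ← euclNorm_eq_norm, ← specNorm_eq_norm] at h
  rw [← euclNorm_sq, ← euclNorm_sq, ← mul_pow]
  exact pow_le_pow_left₀ (Real.sqrt_nonneg _) h 2

theorem Matrix.opNormLE_of_specNorm_le {n d : ℕ} {W : Matrix (Fin n) (Fin d) ℝ} {B : ℝ}
    (h : specNorm W ≤ B) : W.OpNormLE B :=
  W.opNormLE_specNorm.mono (by rw [specNorm_eq_norm]; exact norm_nonneg _) h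

def FeatureIdx (k d : ℕ) : ℕ → Type
  | 0 => Fin d
  | j + 1 => Fin k → FeatureIdx k d j

instance FeatureIdx.instFintype (k d : ℕ) : ∀ j, Fintype (FeatureIdx k d j)
  | 0 => inferInstanceAs (Fintype (Fin d))
  | j + 1 =>
    letI := FeatureIdx.instFintype k d j
    inferInstanceAs (Fintype (Fin k → FeatureIdx k d j))

/-- The tensor power `x^{⊗k^j}`, its factors nested as `j` levels of `k`-fold tensors. -/
def feature (k : ℕ) {d : ℕ} : ∀ j, (Fin d → ℝ) → FeatureIdx k d j → ℝ
  | 0, x => x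
  | j + 1, x => tensorPowVec k (feature k j x)

theorem sum_feature_sq (k : ℕ) {d : ℕ} (x : Fin d → ℝ) :
    ∀ j, ∑ s, feature k j x s ^ 2 = (∑ a, x a ^ 2) ^ (k ^ j)
  | 0 => by simp only [feature, pow_zero, pow_one]; rfl
  | j + 1 => by
    rw [pow_succ, pow_mul, ← sum_feature_sq k x j]
    exact sum_tensorPowVec_sq k (feature k j x)

theorem sum_sum_feature_sq_le {k L m d : ℕ} {bx : ℝ} (x : Fin m → Fin d → ℝ)
    (hx : ∀ i, euclNorm (x i) ≤ bx) :
    ∑ i, ∑ t, feature k L (x i) t ^ 2 ≤ m * (bx ^ k ^ L) ^ 2 :=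
  calc ∑ i, ∑ t, feature k L (x i) t ^ 2 ≤ ∑ _i : Fin m, (bx ^ 2) ^ k ^ L := by
        gcongr with i
        rw [sum_feature_sq, ← euclNorm_sq]
        exact pow_le_pow_left₀ (pow_nonneg (Real.sqrt_nonneg _) 2)
          (pow_le_pow_left₀ (Real.sqrt_nonneg _) (hx i) 2) _
    _ = m * (bx ^ k ^ L) ^ 2 := by simp [← pow_mul, mul_comm]

section Network

variable (k : ℕ) (dims : ℕ → ℕ) (W : ∀ j : ℕ, Matrix (Fin (dims (j + 1))) (Fin (dims j)) ℝ)

def fwdCoeff : ∀ j, Matrix (Fin (dims j)) (FeatureIdx k (dims 0) j) ℝ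
  | 0 => (1 : Matrix (Fin (dims 0)) (Fin (dims 0)) ℝ)
  | j + 1 => (W j * fwdCoeff j).rowTensorPow k

theorem fwd_eq_fwdCoeff_mulVec (x : Fin (dims 0) → ℝ) :
    ∀ j, fwd k dims W j x = fwdCoeff k dims W j *ᵥ feature k j x
  | 0 => (Matrix.one_mulVec x).symm
  | j + 1 => by
    have h := Matrix.rowTensorPow_mulVec_tensorPowVec k (W j * fwdCoeff k dims W j)
      (feature k j x)
    rw [← Matrix.mulVec_mulVec, ← fwd_eq_fwdCoeff_mulVec x j] at h
    exact h.symm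

theorem sum_range_succ_pow_succ (j : ℕ) :
    ∑ t ∈ range (j + 1), k ^ (t + 1) = (1 + ∑ t ∈ range j, k ^ (t + 1)) * k := by
  rw [sum_range_succ', add_comm, add_mul, one_mul, sum_mul]
  simp [pow_succ]

theorem opNormLE_fwdCoeff (hk : k ≠ 0) {B : ℝ} (hB : 0 ≤ B) :
    ∀ j, (∀ i < j, specNorm (W i) ≤ B) →
      (fwdCoeff k dims W j).OpNormLE (B ^ ∑ t ∈ range j, k ^ (t + 1))
  | 0, _ => by
    rw [range_zero, sum_empty, pow_zero]
    exact Matrix.opNormLE_one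
  | j + 1, hW => by
    have hC := opNormLE_fwdCoeff hk hB j fun i hi => hW i (by omega)
    rw [sum_range_succ_pow_succ, pow_mul, pow_add, pow_one]
    exact ((Matrix.opNormLE_of_specNorm_le (hW j (by omega))).mul hC).rowTensorPow hk

end Network

theorem sum_mul_fwd_le {k L m : ℕ} (hk : k ≠ 0) {b B : ℝ} (hB : 0 ≤ B) {dims : ℕ → ℕ}
    {W : ∀ j : ℕ, Matrix (Fin (dims (j + 1))) (Fin (dims j)) ℝ}
    (hW : ∀ j < L, specNorm (W j) ≤ B) {u : Fin (dims L) → ℝ} (hu : euclNorm u ≤ b)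
    (x : Fin m → Fin (dims 0) → ℝ) (s : Fin m → ℝ) :
    ∑ i, s i * ∑ l, u l * fwd k dims W L (x i) l ≤
      b * B ^ (∑ t ∈ range L, k ^ (t + 1)) * √(∑ t, (∑ i, s i * feature k L (x i) t) ^ 2) := by
  set C := fwdCoeff k dims W L
  set Φ := ∑ i, s i • feature k L (x i)
  have hΦ : ∀ t, Φ t = ∑ i, s i * feature k L (x i) t := fun t => by simp [Φ]
  have hlin : ∑ i, s i * ∑ l, u l * fwd k dims W L (x i) l = ∑ l, u l * (C *ᵥ Φ) l := by
    change ∑ i, s i * (u ⬝ᵥ fwd k dims W L (x i)) = u ⬝ᵥ C *ᵥ Φ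
    simp only [fwd_eq_fwdCoeff_mulVec, Φ, Matrix.mulVec_sum, dotProduct_sum, Matrix.mulVec_smul,
      dotProduct_smul, smul_eq_mul, C]
  have hb : 0 ≤ b := (Real.sqrt_nonneg _).trans hu
  calc ∑ i, s i * ∑ l, u l * fwd k dims W L (x i) l
      ≤ √(∑ l, u l ^ 2) * √(∑ l, (C *ᵥ Φ) l ^ 2) := hlin ▸ Real.sum_mul_le_sqrt_mul_sqrt _ _ _
    _ ≤ b * √((B ^ ∑ t ∈ range L, k ^ (t + 1)) ^ 2 * ∑ t, Φ t ^ 2) :=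
        mul_le_mul hu (Real.sqrt_le_sqrt (opNormLE_fwdCoeff k dims W hk hB L hW Φ))
          (Real.sqrt_nonneg _) hb
    _ = _ := by
        rw [Real.sqrt_mul (sq_nonneg _), Real.sqrt_sq (by positivity), mul_assoc]
        simp only [hΦ]

section Rademacher

variable {m : ℕ}

theorem rademacherExp_eq_sum_smul (f : (Fin m → ℝ) → ℝ) :
    rademacherExp m f =
      ∑ ε : Fin m → Bool, ((2 : ℝ) ^ m)⁻¹ • f fun i => if ε i then 1 else -1 := by
  rw [rademacherExp, div_eq_inv_mul, mul_sum]
  rfl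

theorem rademacherExp_mono {f g : (Fin m → ℝ) → ℝ} (h : ∀ s, f s ≤ g s) :
    rademacherExp m f ≤ rademacherExp m g := by
  unfold rademacherExp
  gcongr with ε
  exact h _

theorem rademacherExp_const_mul (c : ℝ) (f : (Fin m → ℝ) → ℝ) :
    rademacherExp m (fun s => c * f s) = c * rademacherExp m f := by
  simp only [rademacherExp, ← mul_sum, mul_div_assoc]

theorem rademacherExp_sum {ι : Type*} (t : Finset ι) (f : ι → (Fin m → ℝ) → ℝ) :
    rademacherExp m (fun s => ∑ a ∈ t, f a s) = ∑ a ∈ t, rademacherExp m (f a) := by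
  simp only [rademacherExp, ← sum_div]
  rw [sum_comm]

theorem rademacherExp_sqrt_le {f : (Fin m → ℝ) → ℝ} (hf : ∀ s, 0 ≤ f s) :
    rademacherExp m (fun s => √(f s)) ≤ √(rademacherExp m f) := by
  rw [rademacherExp_eq_sum_smul, rademacherExp_eq_sum_smul]
  refine Real.strictConcaveOn_sqrt.concaveOn.le_map_sum (fun _ _ => by positivity) ?_
    fun _ _ => Set.mem_Ici.mpr (hf _)
  simp

theorem rademacherExp_mul_sign (i j : Fin m) :
    rademacherExp m (fun s => s i * s j) = if i = j then 1 else 0 := by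
  split_ifs with hij
  · subst hij
    have hsq : ∀ b : Bool, (if b then (1 : ℝ) else -1) * (if b then 1 else -1) = 1 := by
      intro b; cases b <;> norm_num
    simp [rademacherExp, hsq]
  · rw [rademacherExp, div_eq_zero_iff]
    left
    -- flipping the sign `ε j` negates the summand
    refine sum_ninvolution (fun ε => Function.update ε j (!ε j)) (fun ε => ?_)
      (fun ε _ hfix => by simpa using congrFun hfix j) (fun _ => mem_univ _) (fun ε => by simp)
    simp only [Function.update_of_ne hij, Function.update_self]
    cases ε i <;> cases ε j <;> norm_num

theorem rademacherExp_sq_sum (a : Fin m → ℝ) :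
    rademacherExp m (fun s => (∑ i, s i * a i) ^ 2) = ∑ i, a i ^ 2 := by
  have h : ∀ s : Fin m → ℝ, (∑ i, s i * a i) ^ 2 = ∑ i, ∑ j, a i * a j * (s i * s j) := by
    intro s
    rw [sq, sum_mul_sum]
    exact sum_congr rfl fun i _ => sum_congr rfl fun j _ => by ring
  simp only [h, rademacherExp_sum, rademacherExp_const_mul, rademacherExp_mul_sign]
  simp [sq]

theorem rademacherExp_sqrt_sum_sq_le {ι : Type*} [Fintype ι] (a : Fin m → ι → ℝ) :
    rademacherExp m (fun s => √(∑ t, (∑ i, s i * a i t) ^ 2)) ≤ √(∑ i, ∑ t, a i t ^ 2) := by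
  refine (rademacherExp_sqrt_le fun _ => sum_nonneg fun _ _ => sq_nonneg _).trans_eq ?_
  rw [rademacherExp_sum, sum_comm]
  simp only [rademacherExp_sq_sum]

end Rademacher

theorem stmt13_general (k L : ℕ) (hk : 1 ≤ k) (b B bx : ℝ)
    (hb : 0 < b) (hB : 0 < B) (hbx : 0 < bx) (dims : ℕ → ℕ) (m : ℕ)
    (x : Fin m → Fin (dims 0) → ℝ) (hx : ∀ i, euclNorm (x i) ≤ bx) :
    rademacherExp m (fun ε =>
        ⨆ p : {p : (∀ j : ℕ, Matrix (Fin (dims (j + 1))) (Fin (dims j)) ℝ) ×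
                    (Fin (dims L) → ℝ) //
                (∀ j, j < L → specNorm (p.1 j) ≤ B) ∧ euclNorm p.2 ≤ b},
          (1 / (m : ℝ)) * ∑ i, ε i * ∑ l, p.1.2 l * fwd k dims p.1.1 L (x i) l)
      ≤ b * B ^ (∑ t ∈ Finset.range L, k ^ (t + 1)) * bx ^ (k ^ L) / Real.sqrt m := by
  set c := b * B ^ (∑ t ∈ Finset.range L, k ^ (t + 1))
  have : Nonempty {p : (∀ j : ℕ, Matrix (Fin (dims (j + 1))) (Fin (dims j)) ℝ) ×
      (Fin (dims L) → ℝ) // (∀ j, j < L → specNorm (p.1 j) ≤ B) ∧ euclNorm p.2 ≤ b} :=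
    ⟨⟨(0, 0), fun j _ => by simp [specNorm_eq_norm, hB.le], by simp [euclNorm, hb.le]⟩⟩
  calc _ ≤ rademacherExp m (fun s => 1 / m * c * √(∑ t, (∑ i, s i * feature k L (x i) t) ^ 2)) :=
        rademacherExp_mono fun s => ciSup_le fun ⟨_, hW, hu⟩ => by
          rw [mul_assoc]
          exact mul_le_mul_of_nonneg_left (sum_mul_fwd_le (by omega) hB.le hW hu x s)
            (by positivity)
    _ ≤ 1 / m * c * √(m * (bx ^ k ^ L) ^ 2) := by
        rw [rademacherExp_const_mul]
        gcongr
        exact (rademacherExp_sqrt_sum_sq_le _).trans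
          (Real.sqrt_le_sqrt (sum_sum_feature_sq_le x hx))
    _ = c * bx ^ k ^ L * (√m / m) := by
        rw [Real.sqrt_mul (Nat.cast_nonneg m), Real.sqrt_sq (by positivity)]; ring
    _ = _ := by rw [Real.sqrt_div_self']; ring

/-- Rademacher complexity bound for depth-`(L+1)` networks with power activation
`z ↦ z^k`, spectral norm bounds `‖W^j‖ ≤ B` and `‖u‖ ≤ b`, on points of norm `≤ b_x`:
at most `b · B^{k+k²+⋯+k^L} · b_x^{k^L} / √m`. -/
theorem stmt13 (k L : ℕ) (hk : 1 ≤ k) (hL : 1 ≤ L) (b B bx : ℝ)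
    (hb : 0 < b) (hB : 0 < B) (hbx : 0 < bx) (dims : ℕ → ℕ) (m : ℕ) (hm : 1 ≤ m)
    (x : Fin m → Fin (dims 0) → ℝ) (hx : ∀ i, euclNorm (x i) ≤ bx) :
    rademacherExp m (fun ε =>
        ⨆ p : {p : (∀ j : ℕ, Matrix (Fin (dims (j + 1))) (Fin (dims j)) ℝ) ×
                    (Fin (dims L) → ℝ) //
                (∀ j, j < L → specNorm (p.1 j) ≤ B) ∧ euclNorm p.2 ≤ b},
          (1 / (m : ℝ)) * ∑ i, ε i * ∑ l, p.1.2 l * fwd k dims p.1.1 L (x i) l)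
      ≤ b * B ^ (∑ t ∈ Finset.range L, k ^ (t + 1)) * bx ^ (k ^ L) / Real.sqrt m :=
  stmt13_general k L hk b B bx hb hB hbx dims m x hx
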